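/- Let Y, U1, U4 be discrete random variables, and let Q_{Y|U1,U4} be any strictly positive conditional pmf, Q_{U1}, Q_{U2}, Q_{U3} strictly positive pmfs. With the factorized joint law P_{X1,X2,X3,Y}·P_{U1|X1}·P_{U2|X2}·P_{U3|X3}·P_{U4|U2,U3} and s ≥ 0, the quantity L := -H(Y|U1,U4) - s·I(X1;U1) - 2s[I(X2;U2)+I(X3;U3)] + 2s[I(U2;U1)+I(U3;U1,U2)] satisfies L ≥ E[log Q_{Y|U1,U4}(Y|U1,U4)] - s·E[D_KL(P_{U1|X1}(·|X1)||Q_{U1})] - 2s·E[D_KL(P_{U2|X2}(·|X2)||Q_{U2})] - 2s·E[D_KL(P_{U3|X3}(·|X3)||Q_{U3})], with equality when Q_{Y|U1,U4}=P_{Y|U1,U4}, Q_{U1}=P_{U1}, Q_{U2}=P_{U2|U1}, and Q_{U3}=P_{U3|U1,U2}. -/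
import Mathlib


open Real
open scoped BigOperators Classical

noncomputable section

/-- Shannon entropy of a pmf on a finite alphabet. -/
def ent {α : Type*} [Fintype α] (p : α → ℝ) : ℝ := -∑ x, p x * Real.log (p x)

/-- Kullback–Leibler divergence between pmfs on a finite alphabet. -/
def kl {α : Type*} [Fintype α] (p q : α → ℝ) : ℝ := ∑ x, p x * Real.log (p x / q x)

/-- Marginal pmf of the random variable `f` under joint pmf `p`. -/
def margOf {Ω α : Type*} [Fintype Ω] (p : Ω → ℝ) (f : Ω → α) (a : α) : ℝ :=
  ∑ ω, if f ω = a then p ω else 0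

/-- Entropy of the random variable `f` under joint pmf `p`. -/
def entOf {Ω α : Type*} [Fintype Ω] [Fintype α] (p : Ω → ℝ) (f : Ω → α) : ℝ :=
  ent (margOf p f)

/-- Conditional entropy `H(f | g)` under joint pmf `p`. -/
def condEntOf {Ω α β : Type*} [Fintype Ω] [Fintype α] [Fintype β]
    (p : Ω → ℝ) (f : Ω → α) (g : Ω → β) : ℝ :=
  entOf p (fun ω => (g ω, f ω)) - entOf p g

/-- Mutual information `I(f ; g)` under joint pmf `p`. -/
def miOf {Ω α β : Type*} [Fintype Ω] [Fintype α] [Fintype β]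
    (p : Ω → ℝ) (f : Ω → α) (g : Ω → β) : ℝ :=
  entOf p f + entOf p g - entOf p (fun ω => (f ω, g ω))

/-- Conditional mutual information `I(f ; g | h)` under joint pmf `p`. -/
def cmiOf {Ω α β γ : Type*} [Fintype Ω] [Fintype α] [Fintype β] [Fintype γ]
    (p : Ω → ℝ) (f : Ω → α) (g : Ω → β) (h : Ω → γ) : ℝ :=
  entOf p (fun ω => (h ω, f ω)) + entOf p (fun ω => (h ω, g ω))
    - entOf p (fun ω => (h ω, f ω, g ω)) - entOf p h

set_option linter.unusedSectionVars false
set_option linter.unusedVariables false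

section Aux
variable {Ω α β : Type*} [Fintype Ω] [Fintype α] [Fintype β]

lemma gibbs (p q : α → ℝ) (hp0 : ∀ x, 0 ≤ p x) (hp1 : ∑ x, p x = 1)
    (hq0 : ∀ x, 0 ≤ q x) (hq1 : ∑ x, q x ≤ 1)
    (hpq : ∀ x, p x ≠ 0 → q x ≠ 0) :
    ∑ x, p x * Real.log (q x) ≤ ∑ x, p x * Real.log (p x) := by
  have key : ∀ x, p x * Real.log (q x) - p x * Real.log (p x) ≤ q x - p x := by
    intro x
    rcases eq_or_lt_of_le (hp0 x) with h | h
    · simp [← h]; exact hq0 x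
    · have hq : 0 < q x := lt_of_le_of_ne (hq0 x) (Ne.symm (hpq x h.ne'))
      have hlog := Real.log_le_sub_one_of_pos (div_pos hq h)
      rw [Real.log_div hq.ne' h.ne'] at hlog
      have hmul := mul_le_mul_of_nonneg_left hlog h.le
      have heq : p x * (q x / p x - 1) = q x - p x := by field_simp
      linarith
  have hsum : ∑ x, p x * Real.log (q x) - ∑ x, p x * Real.log (p x)
      ≤ ∑ x, q x - ∑ x, p x := by
    rw [← Finset.sum_sub_distrib, ← Finset.sum_sub_distrib]
    exact Finset.sum_le_sum fun x _ => key x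
  rw [hp1] at hsum
  linarith

lemma kl_eq_sub (p q : α → ℝ) (hq : ∀ x, p x ≠ 0 → q x ≠ 0) :
    kl p q = ∑ x, p x * Real.log (p x) - ∑ x, p x * Real.log (q x) := by
  rw [kl, ← Finset.sum_sub_distrib]
  refine Finset.sum_congr rfl fun x _ => ?_
  by_cases h : p x = 0
  · simp [h]
  · rw [Real.log_div h (hq x h), mul_sub]

lemma kl_nonneg (p q : α → ℝ) (hp0 : ∀ x, 0 ≤ p x) (hp1 : ∑ x, p x = 1)
    (hq0 : ∀ x, 0 ≤ q x) (hq1 : ∑ x, q x ≤ 1)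
    (hpq : ∀ x, p x ≠ 0 → q x ≠ 0) : 0 ≤ kl p q := by
  rw [kl_eq_sub p q hpq]
  have := gibbs p q hp0 hp1 hq0 hq1 hpq
  linarith

lemma kl_self' (p q : α → ℝ) (h : ∀ x, p x = q x) : kl p q = 0 := by
  rw [kl]
  refine Finset.sum_eq_zero fun x _ => ?_
  by_cases hx : p x = 0
  · simp [hx]
  · rw [h x, div_self (by rw [← h x]; exact hx), Real.log_one, mul_zero]

lemma margOf_nonneg (p : Ω → ℝ) (hp0 : ∀ ω, 0 ≤ p ω) (f : Ω → α) (a : α) :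
    0 ≤ margOf p f a :=
  Finset.sum_nonneg fun ω _ => by split <;> simp [hp0 ω]

lemma sum_comp (p : Ω → ℝ) (f : Ω → α) (F : α → ℝ) :
    ∑ a, margOf p f a * F a = ∑ ω, p ω * F (f ω) := by
  simp only [margOf, Finset.sum_mul, ite_mul, zero_mul]
  rw [Finset.sum_comm]
  simp [Finset.sum_ite_eq]

lemma sum_marg (p : Ω → ℝ) (f : Ω → α) : ∑ a, margOf p f a = ∑ ω, p ω := by
  have := sum_comp p f (fun _ => 1); simpa using this

lemma marg_fst (p : Ω → ℝ) (f : Ω → α) (g : Ω → β) (a : α) :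
    ∑ b, margOf p (fun ω => (f ω, g ω)) (a, b) = margOf p f a := by
  simp only [margOf, Prod.mk.injEq, ite_and]
  rw [Finset.sum_comm]
  refine Finset.sum_congr rfl fun ω _ => ?_
  simp [Finset.sum_ite_irrel, Finset.sum_ite_eq]

lemma marg_snd (p : Ω → ℝ) (f : Ω → α) (g : Ω → β) (b : β) :
    ∑ a, margOf p (fun ω => (f ω, g ω)) (a, b) = margOf p g b := by
  simp only [margOf, Prod.mk.injEq, ite_and]
  rw [Finset.sum_comm]
  refine Finset.sum_congr rfl fun ω _ => ?_
  by_cases h : g ω = b <;> simp [h, Finset.sum_ite_eq]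

lemma marg_swap (p : Ω → ℝ) (f : Ω → α) (g : Ω → β) (a : α) (b : β) :
    margOf p (fun ω => (f ω, g ω)) (a, b) = margOf p (fun ω => (g ω, f ω)) (b, a) := by
  refine Finset.sum_congr rfl fun ω _ => ?_
  by_cases h1 : f ω = a <;> by_cases h2 : g ω = b <;> simp [h1, h2]

lemma marg_le_fst (p : Ω → ℝ) (hp0 : ∀ ω, 0 ≤ p ω) (f : Ω → α) (g : Ω → β) (a : α) (b : β) :
    margOf p (fun ω => (f ω, g ω)) (a, b) ≤ margOf p f a := by
  rw [← marg_fst p f g a]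
  exact Finset.single_le_sum (f := fun b' => margOf p (fun ω => (f ω, g ω)) (a, b'))
    (fun b' _ => margOf_nonneg p hp0 _ _) (Finset.mem_univ b)

lemma marg_le_snd (p : Ω → ℝ) (hp0 : ∀ ω, 0 ≤ p ω) (f : Ω → α) (g : Ω → β) (a : α) (b : β) :
    margOf p (fun ω => (f ω, g ω)) (a, b) ≤ margOf p g b := by
  rw [← marg_snd p f g b]
  exact Finset.single_le_sum (f := fun a' => margOf p (fun ω => (f ω, g ω)) (a', b))
    (fun a' _ => margOf_nonneg p hp0 _ _) (Finset.mem_univ a)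

end Aux

section Mid
variable {Ω α β : Type*} [Fintype Ω] [Fintype α] [Fintype β]

lemma sum_log_mul (J A B : α → ℝ) (h : ∀ x, J x ≠ 0 → A x ≠ 0 ∧ B x ≠ 0) :
    ∑ x, J x * Real.log (A x * B x)
      = ∑ x, J x * Real.log (A x) + ∑ x, J x * Real.log (B x) := by
  rw [← Finset.sum_add_distrib]
  refine Finset.sum_congr rfl fun x _ => ?_
  by_cases hx : J x = 0
  · simp [hx]
  · obtain ⟨hA, hB⟩ := h x hx
    rw [Real.log_mul hA hB, mul_add]

lemma sum_log_eq (J A B : α → ℝ)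
    (h : ∀ x, J x ≠ 0 → (J x = A x * B x ∧ A x ≠ 0 ∧ B x ≠ 0)) :
    ∑ x, J x * Real.log (J x)
      = ∑ x, J x * Real.log (A x) + ∑ x, J x * Real.log (B x) := by
  rw [← Finset.sum_add_distrib]
  refine Finset.sum_congr rfl fun x _ => ?_
  by_cases hx : J x = 0
  · simp [hx]
  · obtain ⟨he, hA, hB⟩ := h x hx
    rw [he, Real.log_mul hA hB, mul_add, ← he]

lemma sum_pair_fst (p : Ω → ℝ) (f : Ω → α) (g : Ω → β) (F : α → ℝ) :
    ∑ v : α × β, margOf p (fun ω => (f ω, g ω)) v * F v.1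
      = ∑ a, margOf p f a * F a := by
  rw [Fintype.sum_prod_type]
  refine Finset.sum_congr rfl fun a _ => ?_
  dsimp only
  rw [← Finset.sum_mul, marg_fst]

lemma sum_pair_snd (p : Ω → ℝ) (f : Ω → α) (g : Ω → β) (F : β → ℝ) :
    ∑ v : α × β, margOf p (fun ω => (f ω, g ω)) v * F v.2
      = ∑ b, margOf p g b * F b := by
  rw [Fintype.sum_prod_type_right]
  refine Finset.sum_congr rfl fun b _ => ?_
  dsimp only
  rw [← Finset.sum_mul, marg_snd]

lemma mi_nonneg (p : Ω → ℝ) (hp0 : ∀ ω, 0 ≤ p ω) (hp1 : ∑ ω, p ω = 1)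
    (f : Ω → α) (g : Ω → β) : 0 ≤ miOf p f g := by
  have hJ0 : ∀ v : α × β, 0 ≤ margOf p (fun ω => (f ω, g ω)) v :=
    fun v => margOf_nonneg p hp0 _ _
  have hJ1 : ∑ v : α × β, margOf p (fun ω => (f ω, g ω)) v = 1 := by
    rw [sum_marg, hp1]
  have hfac : ∀ v : α × β, margOf p (fun ω => (f ω, g ω)) v ≠ 0 →
      margOf p f v.1 * margOf p g v.2 ≠ 0 := by
    rintro ⟨a, b⟩ hv
    have h1 : margOf p (fun ω => (f ω, g ω)) (a, b) ≤ margOf p f a :=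
      marg_le_fst p hp0 f g a b
    have h2 : margOf p (fun ω => (f ω, g ω)) (a, b) ≤ margOf p g b :=
      marg_le_snd p hp0 f g a b
    have h0 : 0 < margOf p (fun ω => (f ω, g ω)) (a, b) :=
      lt_of_le_of_ne (hJ0 _) (Ne.symm hv)
    exact mul_ne_zero (by linarith : (0:ℝ) < margOf p f a).ne'
      (by linarith : (0:ℝ) < margOf p g b).ne'
  have hq1 : ∑ v : α × β, margOf p f v.1 * margOf p g v.2 ≤ 1 := by
    rw [Fintype.sum_prod_type]
    simp only [← Finset.mul_sum]
    rw [← Finset.sum_mul, sum_marg, sum_marg, hp1, one_mul]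
  have hgibbs := gibbs (margOf p (fun ω => (f ω, g ω)))
    (fun v => margOf p f v.1 * margOf p g v.2) hJ0 hJ1
    (fun v => mul_nonneg (margOf_nonneg p hp0 _ _) (margOf_nonneg p hp0 _ _))
    hq1 hfac
  rw [sum_log_mul (margOf p (fun ω => (f ω, g ω)))
      (fun v => margOf p f v.1) (fun v => margOf p g v.2)
      (fun v hv => mul_ne_zero_iff.mp (hfac v hv)),
    sum_pair_fst p f g (fun a => Real.log (margOf p f a)),
    sum_pair_snd p f g (fun b => Real.log (margOf p g b))] at hgibbs
  simp only [miOf, entOf, ent]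
  linarith

lemma mi_indep (p : Ω → ℝ) (f : Ω → α) (g : Ω → β)
    (hfac : ∀ a b, margOf p (fun ω => (f ω, g ω)) (a, b)
      = margOf p f a * margOf p g b) :
    miOf p f g = 0 := by
  have hexp : ∑ v : α × β,
        margOf p (fun ω => (f ω, g ω)) v
          * Real.log (margOf p (fun ω => (f ω, g ω)) v)
      = ∑ a, margOf p f a * Real.log (margOf p f a)
        + ∑ b, margOf p g b * Real.log (margOf p g b) := by
    rw [sum_log_eq (margOf p (fun ω => (f ω, g ω)))
        (fun v => margOf p f v.1) (fun v => margOf p g v.2)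
        (fun v hv => by
          have he : margOf p (fun ω => (f ω, g ω)) v
              = margOf p f v.1 * margOf p g v.2 := hfac v.1 v.2
          rw [he] at hv
          exact ⟨he, mul_ne_zero_iff.mp hv⟩),
      sum_pair_fst p f g (fun a => Real.log (margOf p f a)),
      sum_pair_snd p f g (fun b => Real.log (margOf p g b))]
  simp only [miOf, entOf, ent]
  linarith

lemma kl_identity (p : Ω → ℝ) (hp0 : ∀ ω, 0 ≤ p ω)
    (f : Ω → α) (g : Ω → β) (k : α → β → ℝ)
    (hfac : ∀ a b, margOf p (fun ω => (f ω, g ω)) (a, b) = margOf p f a * k a b)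
    (Q : β → ℝ) (hQ0 : ∀ b, 0 < Q b) :
    ∑ a, margOf p f a * kl (k a) Q = miOf p f g + kl (margOf p g) Q := by
  have hknz : ∀ v : α × β, margOf p (fun ω => (f ω, g ω)) v ≠ 0 →
      margOf p f v.1 ≠ 0 ∧ k v.1 v.2 ≠ 0 := by
    rintro ⟨a, b⟩ hv
    rw [hfac a b] at hv
    exact mul_ne_zero_iff.mp hv
  have hlhs : ∑ a, margOf p f a * kl (k a) Q
      = ∑ v : α × β, margOf p (fun ω => (f ω, g ω)) v
          * Real.log (k v.1 v.2 / Q v.2) := by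
    rw [Fintype.sum_prod_type]
    refine Finset.sum_congr rfl fun a _ => ?_
    rw [kl, Finset.mul_sum]
    refine Finset.sum_congr rfl fun b _ => ?_
    dsimp only
    rw [hfac a b]; ring
  have hsplit : ∑ v : α × β, margOf p (fun ω => (f ω, g ω)) v
        * Real.log (k v.1 v.2 / Q v.2)
      = ∑ v : α × β, margOf p (fun ω => (f ω, g ω)) v * Real.log (k v.1 v.2)
        - ∑ v : α × β, margOf p (fun ω => (f ω, g ω)) v * Real.log (Q v.2) := by
    rw [← Finset.sum_sub_distrib]
    refine Finset.sum_congr rfl fun v _ => ?_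
    by_cases hv : margOf p (fun ω => (f ω, g ω)) v = 0
    · simp [hv]
    · rw [Real.log_div (hknz v hv).2 (hQ0 v.2).ne', mul_sub]
  have hJJ : ∑ v : α × β, margOf p (fun ω => (f ω, g ω)) v
        * Real.log (margOf p (fun ω => (f ω, g ω)) v)
      = ∑ a, margOf p f a * Real.log (margOf p f a)
        + ∑ v : α × β, margOf p (fun ω => (f ω, g ω)) v * Real.log (k v.1 v.2) := by
    rw [sum_log_eq (margOf p (fun ω => (f ω, g ω)))
        (fun v => margOf p f v.1) (fun v => k v.1 v.2)
        (fun v hv => ⟨hfac v.1 v.2, hknz v hv⟩),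
      sum_pair_fst p f g (fun a => Real.log (margOf p f a))]
  have hJQ : ∑ v : α × β, margOf p (fun ω => (f ω, g ω)) v * Real.log (Q v.2)
      = ∑ b, margOf p g b * Real.log (Q b) :=
    sum_pair_snd p f g (fun b => Real.log (Q b))
  have hklB : kl (margOf p g) Q
      = ∑ b, margOf p g b * Real.log (margOf p g b)
        - ∑ b, margOf p g b * Real.log (Q b) :=
    kl_eq_sub (margOf p g) Q (fun b _ => (hQ0 b).ne')
  simp only [miOf, entOf, ent]
  rw [hlhs, hsplit]
  linarith [hJJ, hJQ, hklB]

end Mid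

section LogQ
variable {Ω α β : Type*} [Fintype Ω] [Fintype α] [Fintype β]

lemma logQ_le (p : Ω → ℝ) (hp0 : ∀ ω, 0 ≤ p ω) (hp1 : ∑ ω, p ω = 1)
    (Yf : Ω → α) (Vf : Ω → β) (Q : β → α → ℝ)
    (hQ0 : ∀ v y, 0 < Q v y) (hQ1 : ∀ v, ∑ y, Q v y = 1) :
    ∑ ω, p ω * Real.log (Q (Vf ω) (Yf ω)) ≤ -condEntOf p Yf Vf := by
  have h1 : ∑ ω, p ω * Real.log (Q (Vf ω) (Yf ω))
      = ∑ v : β × α, margOf p (fun ω => (Vf ω, Yf ω)) v * Real.log (Q v.1 v.2) :=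
    (sum_comp p (fun ω => (Vf ω, Yf ω)) (fun v => Real.log (Q v.1 v.2))).symm
  have hJ0 : ∀ v : β × α, 0 ≤ margOf p (fun ω => (Vf ω, Yf ω)) v :=
    fun v => margOf_nonneg p hp0 _ _
  have hJ1 : ∑ v : β × α, margOf p (fun ω => (Vf ω, Yf ω)) v = 1 := by
    rw [sum_marg, hp1]
  have hcompat : ∀ v : β × α, margOf p (fun ω => (Vf ω, Yf ω)) v ≠ 0 →
      margOf p Vf v.1 ≠ 0 ∧ Q v.1 v.2 ≠ 0 := by
    rintro ⟨b, a⟩ hv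
    have h1' : margOf p (fun ω => (Vf ω, Yf ω)) (b, a) ≤ margOf p Vf b :=
      marg_le_fst p hp0 Vf Yf b a
    have h0 : 0 < margOf p (fun ω => (Vf ω, Yf ω)) (b, a) :=
      lt_of_le_of_ne (hJ0 _) (Ne.symm hv)
    exact ⟨(by linarith : (0:ℝ) < margOf p Vf b).ne', (hQ0 b a).ne'⟩
  have hq1 : ∑ v : β × α, margOf p Vf v.1 * Q v.1 v.2 ≤ 1 := by
    rw [Fintype.sum_prod_type]
    simp only [← Finset.mul_sum]
    have : ∀ b, margOf p Vf b * ∑ y, Q b y = margOf p Vf b := by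
      intro b; rw [hQ1 b, mul_one]
    rw [Finset.sum_congr rfl fun b _ => this b, sum_marg, hp1]
  have hgibbs := gibbs (margOf p (fun ω => (Vf ω, Yf ω)))
    (fun v => margOf p Vf v.1 * Q v.1 v.2) hJ0 hJ1
    (fun v => mul_nonneg (margOf_nonneg p hp0 _ _) (hQ0 _ _).le) hq1
    (fun v hv => mul_ne_zero (hcompat v hv).1 (hcompat v hv).2)
  rw [sum_log_mul (margOf p (fun ω => (Vf ω, Yf ω)))
      (fun v => margOf p Vf v.1) (fun v => Q v.1 v.2) hcompat,
    sum_pair_fst p Vf Yf (fun b => Real.log (margOf p Vf b))] at hgibbs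
  have h2 : ∑ v : β × α, margOf p (fun ω => (Vf ω, Yf ω)) v * Real.log (Q v.1 v.2)
      ≤ ∑ v : β × α, margOf p (fun ω => (Vf ω, Yf ω)) v
          * Real.log (margOf p (fun ω => (Vf ω, Yf ω)) v)
        - ∑ b, margOf p Vf b * Real.log (margOf p Vf b) := by linarith
  rw [h1]
  simp only [condEntOf, entOf, ent]
  linarith

lemma logQ_eq (p : Ω → ℝ) (hp0 : ∀ ω, 0 ≤ p ω)
    (Yf : Ω → α) (Vf : Ω → β) (Q : β → α → ℝ)
    (hQ0 : ∀ v y, 0 < Q v y) (hQ1 : ∀ v, ∑ y, Q v y = 1)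
    (hQ : ∀ v y, Q v y
      = margOf p (fun ω => (Vf ω, Yf ω)) (v, y) / margOf p Vf v) :
    ∑ ω, p ω * Real.log (Q (Vf ω) (Yf ω)) = -condEntOf p Yf Vf := by
  rcases isEmpty_or_nonempty α with ha | ha
  · have hΩ : IsEmpty Ω := ⟨fun ω => ha.elim (Yf ω)⟩
    simp [condEntOf, entOf, ent, margOf, Finset.univ_eq_empty]
  obtain ⟨y0⟩ := ha
  have hM : ∀ v, margOf p Vf v ≠ 0 := by
    intro v hv
    have hle : margOf p (fun ω => (Vf ω, Yf ω)) (v, y0) ≤ margOf p Vf v :=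
      marg_le_fst p hp0 Vf Yf v y0
    have hge : 0 ≤ margOf p (fun ω => (Vf ω, Yf ω)) (v, y0) := margOf_nonneg p hp0 _ _
    have hz : margOf p (fun ω => (Vf ω, Yf ω)) (v, y0) = 0 := le_antisymm (hv ▸ hle) hge
    have := hQ v y0
    rw [hz, hv, div_zero] at this
    exact (hQ0 v y0).ne' this
  have h1 : ∑ ω, p ω * Real.log (Q (Vf ω) (Yf ω))
      = ∑ v : β × α, margOf p (fun ω => (Vf ω, Yf ω)) v * Real.log (Q v.1 v.2) :=
    (sum_comp p (fun ω => (Vf ω, Yf ω)) (fun v => Real.log (Q v.1 v.2))).symm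
  have h2 : ∑ v : β × α, margOf p (fun ω => (Vf ω, Yf ω)) v * Real.log (Q v.1 v.2)
      = ∑ v : β × α, margOf p (fun ω => (Vf ω, Yf ω)) v
          * Real.log (margOf p (fun ω => (Vf ω, Yf ω)) v)
        - ∑ v : β × α, margOf p (fun ω => (Vf ω, Yf ω)) v
          * Real.log (margOf p Vf v.1) := by
    rw [← Finset.sum_sub_distrib]
    refine Finset.sum_congr rfl fun v _ => ?_
    by_cases hv : margOf p (fun ω => (Vf ω, Yf ω)) v = 0
    · simp [hv]
    · have hq : Q v.1 v.2 = margOf p (fun ω => (Vf ω, Yf ω)) v / margOf p Vf v.1 :=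
        hQ v.1 v.2
      rw [hq, Real.log_div hv (hM v.1), mul_sub]
  rw [h1, h2, sum_pair_fst p Vf Yf (fun b => Real.log (margOf p Vf b))]
  simp only [condEntOf, entOf, ent]
  ring

lemma cond_indep (p : Ω → ℝ) (hp0 : ∀ ω, 0 ≤ p ω) (hp1 : ∑ ω, p ω = 1)
    (g1 : Ω → α) (g2 : Ω → β) (Q : β → ℝ)
    (hQ0 : ∀ b, 0 < Q b) (hQ1 : ∑ b, Q b = 1)
    (h : ∀ a b, Q b = margOf p (fun ω => (g1 ω, g2 ω)) (a, b) / margOf p g1 a) :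
    (∀ b, margOf p g2 b = Q b)
      ∧ (∀ a b, margOf p (fun ω => (g1 ω, g2 ω)) (a, b)
          = margOf p g1 a * margOf p g2 b) := by
  have hne : Nonempty β := by
    by_contra hne
    rw [not_nonempty_iff] at hne
    exact absurd hQ1 (by simp)
  obtain ⟨b0⟩ := hne
  have hM : ∀ a, margOf p g1 a ≠ 0 := by
    intro a ha
    have hle : margOf p (fun ω => (g1 ω, g2 ω)) (a, b0) ≤ margOf p g1 a :=
      marg_le_fst p hp0 g1 g2 a b0
    have hge : 0 ≤ margOf p (fun ω => (g1 ω, g2 ω)) (a, b0) := margOf_nonneg p hp0 _ _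
    have hz : margOf p (fun ω => (g1 ω, g2 ω)) (a, b0) = 0 := le_antisymm (ha ▸ hle) hge
    have := h a b0
    rw [hz, ha, div_zero] at this
    exact (hQ0 b0).ne' this
  have hJ : ∀ a b, margOf p (fun ω => (g1 ω, g2 ω)) (a, b) = margOf p g1 a * Q b := by
    intro a b
    rw [h a b, mul_div_cancel₀ _ (hM a)]
  have hmarg : ∀ b, margOf p g2 b = Q b := by
    intro b
    rw [← marg_snd p g1 g2 b]
    calc ∑ a, margOf p (fun ω => (g1 ω, g2 ω)) (a, b)
        = ∑ a, margOf p g1 a * Q b := Finset.sum_congr rfl fun a _ => hJ a b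
      _ = (∑ a, margOf p g1 a) * Q b := by rw [Finset.sum_mul]
      _ = Q b := by rw [sum_marg, hp1, one_mul]
  exact ⟨hmarg, fun a b => by rw [hJ a b, hmarg b]⟩

end LogQ

section Fact
variable {X1 X2 X3 Y U1 U2 U3 U4 : Type*}
    [Fintype X1] [Fintype X2] [Fintype X3] [Fintype Y]
    [Fintype U1] [Fintype U2] [Fintype U3] [Fintype U4]
    (pJ : X1 × X2 × X3 × Y → ℝ)
    (k1 : X1 → U1 → ℝ) (k2 : X2 → U2 → ℝ) (k3 : X3 → U3 → ℝ)
    (k4 : U2 × U3 → U4 → ℝ)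
    (p : X1 × X2 × X3 × Y × U1 × U2 × U3 × U4 → ℝ)
    (hp : ∀ x1 x2 x3 y u1 u2 u3 u4,
      p (x1, x2, x3, y, u1, u2, u3, u4)
        = pJ (x1, x2, x3, y) * k1 x1 u1 * k2 x2 u2 * k3 x3 u3 * k4 (u2, u3) u4)
    (hk11 : ∀ x, ∑ u, k1 x u = 1) (hk21 : ∀ x, ∑ u, k2 x u = 1)
    (hk31 : ∀ x, ∑ u, k3 x u = 1) (hk41 : ∀ v, ∑ u, k4 v u = 1)

include hp hk11 hk21 hk31 hk41 in
lemma fact_tot (hpJ1 : ∑ v, pJ v = 1) : ∑ ω, p ω = 1 := by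
  simp only [Fintype.sum_prod_type, hp, ← Finset.mul_sum, ← Finset.sum_mul,
    hk11, hk21, hk31, hk41, mul_one]
  rw [Fintype.sum_prod_type] at hpJ1
  simp only [Fintype.sum_prod_type] at hpJ1
  exact hpJ1

include hp hk11 hk21 hk31 hk41 in
lemma fact1 (x : X1) (u : U1) :
    margOf p (fun ω => (ω.1, ω.2.2.2.2.1)) (x, u)
      = margOf p (fun ω => ω.1) x * k1 x u := by
  simp only [margOf, Fintype.sum_prod_type, hp, Prod.mk.injEq, ite_and,
    Finset.sum_ite_irrel, Finset.sum_const_zero, Finset.sum_ite_eq',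
    Finset.mem_univ, if_true, ← Finset.mul_sum, ← Finset.sum_mul,
    hk11, hk21, hk31, hk41, mul_one]

include hp hk11 hk21 hk31 hk41 in
lemma fact2 (x : X2) (u : U2) :
    margOf p (fun ω => (ω.2.1, ω.2.2.2.2.2.1)) (x, u)
      = margOf p (fun ω => ω.2.1) x * k2 x u := by
  simp only [margOf, Fintype.sum_prod_type, hp, Prod.mk.injEq, ite_and,
    Finset.sum_ite_irrel, Finset.sum_const_zero, Finset.sum_ite_eq',
    Finset.mem_univ, if_true, ← Finset.mul_sum, ← Finset.sum_mul,
    hk11, hk21, hk31, hk41, mul_one]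

include hp hk11 hk21 hk31 hk41 in
lemma fact3 (x : X3) (u : U3) :
    margOf p (fun ω => (ω.2.2.1, ω.2.2.2.2.2.2.1)) (x, u)
      = margOf p (fun ω => ω.2.2.1) x * k3 x u := by
  simp only [margOf, Fintype.sum_prod_type, hp, Prod.mk.injEq, ite_and,
    Finset.sum_ite_irrel, Finset.sum_const_zero, Finset.sum_ite_eq',
    Finset.mem_univ, if_true, ← Finset.mul_sum, ← Finset.sum_mul,
    hk11, hk21, hk31, hk41, mul_one]

end Fact

/-- Lemma 2 of the paper (variational lower bound): with the factorized joint
law and strictly positive variational distributions `QY, QU1, QU2, QU3`,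
`L ≥ E[log QY(Y|U1,U4)] - s E[D(P_{U1|X1}‖QU1)] - 2s E[D(P_{U2|X2}‖QU2)]
 - 2s E[D(P_{U3|X3}‖QU3)]`, with equality when the variational distributions
equal the conditionals induced by the joint law. -/
theorem stmt8 {X1 X2 X3 Y U1 U2 U3 U4 : Type*}
    [Fintype X1] [Fintype X2] [Fintype X3] [Fintype Y]
    [Fintype U1] [Fintype U2] [Fintype U3] [Fintype U4]
    (pJ : X1 × X2 × X3 × Y → ℝ) (hpJ0 : ∀ v, 0 ≤ pJ v) (hpJ1 : ∑ v, pJ v = 1)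
    (k1 : X1 → U1 → ℝ) (hk10 : ∀ x u, 0 ≤ k1 x u) (hk11 : ∀ x, ∑ u, k1 x u = 1)
    (k2 : X2 → U2 → ℝ) (hk20 : ∀ x u, 0 ≤ k2 x u) (hk21 : ∀ x, ∑ u, k2 x u = 1)
    (k3 : X3 → U3 → ℝ) (hk30 : ∀ x u, 0 ≤ k3 x u) (hk31 : ∀ x, ∑ u, k3 x u = 1)
    (k4 : U2 × U3 → U4 → ℝ) (hk40 : ∀ v u, 0 ≤ k4 v u)
    (hk41 : ∀ v, ∑ u, k4 v u = 1)
    (p : X1 × X2 × X3 × Y × U1 × U2 × U3 × U4 → ℝ)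
    (hp : ∀ x1 x2 x3 y u1 u2 u3 u4,
      p (x1, x2, x3, y, u1, u2, u3, u4)
        = pJ (x1, x2, x3, y) * k1 x1 u1 * k2 x2 u2 * k3 x3 u3 * k4 (u2, u3) u4)
    (s : ℝ) (hs : 0 ≤ s)
    (QY : U1 × U4 → Y → ℝ) (hQY0 : ∀ v y, 0 < QY v y)
    (hQY1 : ∀ v, ∑ y, QY v y = 1)
    (QU1 : U1 → ℝ) (hQU10 : ∀ u, 0 < QU1 u) (hQU11 : ∑ u, QU1 u = 1)
    (QU2 : U2 → ℝ) (hQU20 : ∀ u, 0 < QU2 u) (hQU21 : ∑ u, QU2 u = 1)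
    (QU3 : U3 → ℝ) (hQU30 : ∀ u, 0 < QU3 u) (hQU31 : ∑ u, QU3 u = 1) :
    (∑ ω, p ω * Real.log (QY (ω.2.2.2.2.1, ω.2.2.2.2.2.2.2) ω.2.2.2.1))
        - s * (∑ x, margOf p (fun ω => ω.1) x * kl (k1 x) QU1)
        - 2 * s * (∑ x, margOf p (fun ω => ω.2.1) x * kl (k2 x) QU2)
        - 2 * s * (∑ x, margOf p (fun ω => ω.2.2.1) x * kl (k3 x) QU3)
      ≤ -(condEntOf p (fun ω => ω.2.2.2.1)
            (fun ω => (ω.2.2.2.2.1, ω.2.2.2.2.2.2.2)))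
        - s * miOf p (fun ω => ω.1) (fun ω => ω.2.2.2.2.1)
        - 2 * s * (miOf p (fun ω => ω.2.1) (fun ω => ω.2.2.2.2.2.1)
            + miOf p (fun ω => ω.2.2.1) (fun ω => ω.2.2.2.2.2.2.1))
        + 2 * s * (miOf p (fun ω => ω.2.2.2.2.2.1) (fun ω => ω.2.2.2.2.1)
            + miOf p (fun ω => ω.2.2.2.2.2.2.1)
                (fun ω => (ω.2.2.2.2.1, ω.2.2.2.2.2.1)))
    ∧ ((∀ v y0, QY v y0
          = margOf p (fun ω => ((ω.2.2.2.2.1, ω.2.2.2.2.2.2.2), ω.2.2.2.1))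
              (v, y0)
            / margOf p (fun ω => (ω.2.2.2.2.1, ω.2.2.2.2.2.2.2)) v) →
       (∀ a, QU1 a = margOf p (fun ω => ω.2.2.2.2.1) a) →
       (∀ a b, QU2 b
          = margOf p (fun ω => (ω.2.2.2.2.1, ω.2.2.2.2.2.1)) (a, b)
            / margOf p (fun ω => ω.2.2.2.2.1) a) →
       (∀ a b c, QU3 c
          = margOf p (fun ω => ((ω.2.2.2.2.1, ω.2.2.2.2.2.1), ω.2.2.2.2.2.2.1))
              ((a, b), c)
            / margOf p (fun ω => (ω.2.2.2.2.1, ω.2.2.2.2.2.1)) (a, b)) →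
       (∑ ω, p ω * Real.log (QY (ω.2.2.2.2.1, ω.2.2.2.2.2.2.2) ω.2.2.2.1))
          - s * (∑ x, margOf p (fun ω => ω.1) x * kl (k1 x) QU1)
          - 2 * s * (∑ x, margOf p (fun ω => ω.2.1) x * kl (k2 x) QU2)
          - 2 * s * (∑ x, margOf p (fun ω => ω.2.2.1) x * kl (k3 x) QU3)
        = -(condEntOf p (fun ω => ω.2.2.2.1)
              (fun ω => (ω.2.2.2.2.1, ω.2.2.2.2.2.2.2)))
          - s * miOf p (fun ω => ω.1) (fun ω => ω.2.2.2.2.1)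
          - 2 * s * (miOf p (fun ω => ω.2.1) (fun ω => ω.2.2.2.2.2.1)
              + miOf p (fun ω => ω.2.2.1) (fun ω => ω.2.2.2.2.2.2.1))
          + 2 * s * (miOf p (fun ω => ω.2.2.2.2.2.1) (fun ω => ω.2.2.2.2.1)
              + miOf p (fun ω => ω.2.2.2.2.2.2.1)
                  (fun ω => (ω.2.2.2.2.1, ω.2.2.2.2.2.1)))) := by
  classical
  -- basic facts about p
  have hp0 : ∀ ω, 0 ≤ p ω := by
    rintro ⟨x1, x2, x3, y, u1, u2, u3, u4⟩
    rw [hp]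
    exact mul_nonneg (mul_nonneg (mul_nonneg (mul_nonneg (hpJ0 _) (hk10 _ _))
      (hk20 _ _)) (hk30 _ _)) (hk40 _ _)
  have hp1 : ∑ ω, p ω = 1 := fact_tot pJ k1 k2 k3 k4 p hp hk11 hk21 hk31 hk41 hpJ1
  -- factorization of pair marginals
  have hf1 := fact1 pJ k1 k2 k3 k4 p hp hk11 hk21 hk31 hk41
  have hf2 := fact2 pJ k1 k2 k3 k4 p hp hk11 hk21 hk31 hk41
  have hf3 := fact3 pJ k1 k2 k3 k4 p hp hk11 hk21 hk31 hk41
  -- KL identities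
  have e1 : ∑ x, margOf p (fun ω => ω.1) x * kl (k1 x) QU1
      = miOf p (fun ω => ω.1) (fun ω => ω.2.2.2.2.1)
        + kl (margOf p (fun ω => ω.2.2.2.2.1)) QU1 :=
    kl_identity p hp0 _ _ k1 hf1 QU1 hQU10
  have e2 : ∑ x, margOf p (fun ω => ω.2.1) x * kl (k2 x) QU2
      = miOf p (fun ω => ω.2.1) (fun ω => ω.2.2.2.2.2.1)
        + kl (margOf p (fun ω => ω.2.2.2.2.2.1)) QU2 :=
    kl_identity p hp0 _ _ k2 hf2 QU2 hQU20
  have e3 : ∑ x, margOf p (fun ω => ω.2.2.1) x * kl (k3 x) QU3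
      = miOf p (fun ω => ω.2.2.1) (fun ω => ω.2.2.2.2.2.2.1)
        + kl (margOf p (fun ω => ω.2.2.2.2.2.2.1)) QU3 :=
    kl_identity p hp0 _ _ k3 hf3 QU3 hQU30
  constructor
  · -- the inequality
    have hle : ∑ ω, p ω * Real.log (QY (ω.2.2.2.2.1, ω.2.2.2.2.2.2.2) ω.2.2.2.1)
        ≤ -(condEntOf p (fun ω => ω.2.2.2.1)
            (fun ω => (ω.2.2.2.2.1, ω.2.2.2.2.2.2.2))) :=
      logQ_le p hp0 hp1 (fun ω => ω.2.2.2.1)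
        (fun ω => (ω.2.2.2.2.1, ω.2.2.2.2.2.2.2)) QY hQY0 hQY1
    have hb1 : 0 ≤ kl (margOf p (fun ω => ω.2.2.2.2.1)) QU1 :=
      kl_nonneg _ _ (fun u => margOf_nonneg p hp0 _ _) (by rw [sum_marg, hp1])
        (fun u => (hQU10 u).le) (le_of_eq hQU11) (fun u _ => (hQU10 u).ne')
    have hb2 : 0 ≤ kl (margOf p (fun ω => ω.2.2.2.2.2.1)) QU2 :=
      kl_nonneg _ _ (fun u => margOf_nonneg p hp0 _ _) (by rw [sum_marg, hp1])
        (fun u => (hQU20 u).le) (le_of_eq hQU21) (fun u _ => (hQU20 u).ne')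
    have hb3 : 0 ≤ kl (margOf p (fun ω => ω.2.2.2.2.2.2.1)) QU3 :=
      kl_nonneg _ _ (fun u => margOf_nonneg p hp0 _ _) (by rw [sum_marg, hp1])
        (fun u => (hQU30 u).le) (le_of_eq hQU31) (fun u _ => (hQU30 u).ne')
    have hm21 : 0 ≤ miOf p (fun ω => ω.2.2.2.2.2.1) (fun ω => ω.2.2.2.2.1) :=
      mi_nonneg p hp0 hp1 _ _
    have hm312 : 0 ≤ miOf p (fun ω => ω.2.2.2.2.2.2.1)
        (fun ω => (ω.2.2.2.2.1, ω.2.2.2.2.2.1)) :=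
      mi_nonneg p hp0 hp1 _ _
    rw [e1, e2, e3]
    have q1 : 0 ≤ s * kl (margOf p (fun ω => ω.2.2.2.2.1)) QU1 := mul_nonneg hs hb1
    have q2 : 0 ≤ s * kl (margOf p (fun ω => ω.2.2.2.2.2.1)) QU2 := mul_nonneg hs hb2
    have q3 : 0 ≤ s * kl (margOf p (fun ω => ω.2.2.2.2.2.2.1)) QU3 := mul_nonneg hs hb3
    have q4 : 0 ≤ s * miOf p (fun ω => ω.2.2.2.2.2.1) (fun ω => ω.2.2.2.2.1) :=
      mul_nonneg hs hm21
    have q5 : 0 ≤ s * miOf p (fun ω => ω.2.2.2.2.2.2.1)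
        (fun ω => (ω.2.2.2.2.1, ω.2.2.2.2.2.1)) := mul_nonneg hs hm312
    nlinarith [hle, q1, q2, q3, q4, q5]
  · -- the equality case
    intro hY h1 h2 h3
    have heq : ∑ ω, p ω * Real.log (QY (ω.2.2.2.2.1, ω.2.2.2.2.2.2.2) ω.2.2.2.1)
        = -(condEntOf p (fun ω => ω.2.2.2.1)
            (fun ω => (ω.2.2.2.2.1, ω.2.2.2.2.2.2.2))) :=
      logQ_eq p hp0 (fun ω => ω.2.2.2.1)
        (fun ω => (ω.2.2.2.2.1, ω.2.2.2.2.2.2.2)) QY hQY0 hQY1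
        (fun v y => hY v y)
    -- U1
    have hz1 : kl (margOf p (fun ω => ω.2.2.2.2.1)) QU1 = 0 :=
      kl_self' _ _ (fun u => (h1 u).symm)
    -- U2
    have hc2 := cond_indep p hp0 hp1 (fun ω => ω.2.2.2.2.1)
      (fun ω => ω.2.2.2.2.2.1) QU2 hQU20 hQU21 (fun a b => h2 a b)
    have hz2 : kl (margOf p (fun ω => ω.2.2.2.2.2.1)) QU2 = 0 :=
      kl_self' _ _ hc2.1
    have hmz2 : miOf p (fun ω => ω.2.2.2.2.2.1) (fun ω => ω.2.2.2.2.1) = 0 := by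
      refine mi_indep p (fun ω => ω.2.2.2.2.2.1) (fun ω => ω.2.2.2.2.1)
        (fun b a => ?_)
      rw [marg_swap p (fun ω => ω.2.2.2.2.2.1) (fun ω => ω.2.2.2.2.1) b a,
        hc2.2 a b]
      ring
    -- U3
    have hc3 := cond_indep p hp0 hp1 (fun ω => (ω.2.2.2.2.1, ω.2.2.2.2.2.1))
      (fun ω => ω.2.2.2.2.2.2.1) QU3 hQU30 hQU31 (fun ab c => h3 ab.1 ab.2 c)
    have hz3 : kl (margOf p (fun ω => ω.2.2.2.2.2.2.1)) QU3 = 0 :=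
      kl_self' _ _ hc3.1
    have hmz3 : miOf p (fun ω => ω.2.2.2.2.2.2.1)
        (fun ω => (ω.2.2.2.2.1, ω.2.2.2.2.2.1)) = 0 := by
      refine mi_indep p (fun ω => ω.2.2.2.2.2.2.1)
        (fun ω => (ω.2.2.2.2.1, ω.2.2.2.2.2.1)) (fun c ab => ?_)
      rw [marg_swap p (fun ω => ω.2.2.2.2.2.2.1)
          (fun ω => (ω.2.2.2.2.1, ω.2.2.2.2.2.1)) c ab,
        hc3.2 ab c]
      ring
    rw [e1, e2, e3, heq, hz1, hz2, hz3, hmz2, hmz3]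
    ring
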